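/- Every regular extension of a topologically loosely Kronecker system is topologically loosely Kronecker: let (Y,S) be a topologically loosely Kronecker TDS with unique S-invariant Borel probability measure ν (which exists since such systems are uniquely ergodic), let (X,T) be a TDS, and let φ : X → Y be a continuous surjection with φ ∘ T = S ∘ φ such that ν({y ∈ Y : φ^{-1}({y}) is a singleton}) = 1. Then (X,T) is topologically loosely Kronecker. -/

import Mathlib

/-!
The orbits of `x` and `z` are matched by lifting a good `δ`-match of the orbits of `φ x` and
`φ z` in `Y`. Since all pairs of points of `Y` are Feldman–Katok close, Birkhoff averages of a
continuous function along any two orbits are asymptotically equal; integrating against the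
invariant measure `ν` shows that they all converge to the `ν`-integral. By compactness of `X`,
outside a closed "near-collision" set of small `ν`-measure (small because almost every fibre is a
singleton), two points of `X` whose images are `δ`-close are `ε`-close. Every orbit visits that
set with small frequency, so discarding those times from the lifted match costs little.
-/

open Filter Topology MeasureTheory Set

namespace FKPaper

variable {X : Type*} [MetricSpace X]

/-- The maximal fit of an `(n,δ)`-match between the orbits of `x` and `z` under `T`:
the largest cardinality of the domain of an order-preserving bijection
`π : D → R`, with `D, R ⊆ {0,…,n-1}` and `dist (T^[i] x) (T^[π i] z) < δ` for `i ∈ D`. -/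
noncomputable def maxFit (T : X → X) (δ : ℝ) (n : ℕ) (x z : X) : ℕ :=
  sSup {k : ℕ | ∃ i j : Fin k → ℕ, StrictMono i ∧ StrictMono j ∧
    (∀ s, i s < n) ∧ (∀ s, j s < n) ∧ ∀ s, dist (T^[i s] x) (T^[j s] z) < δ}

/-- `f̄_{n,δ}(x,z) = 1 - (maximal fit of an (n,δ)-match of x and z)/n`. -/
noncomputable def fbarN (T : X → X) (δ : ℝ) (n : ℕ) (x z : X) : ℝ :=
  1 - (maxFit T δ n x z : ℝ) / n

/-- `f̄_δ(x,z) = limsup_{n→∞} f̄_{n,δ}(x,z)`. -/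
noncomputable def fbar (T : X → X) (δ : ℝ) (x z : X) : ℝ :=
  Filter.limsup (fun n => fbarN T δ n x z) Filter.atTop

/-- The Feldman–Katok pseudometric `ρ_FK(x,z) = inf {δ > 0 : f̄_δ(x,z) < δ}`. -/
noncomputable def rhoFK (T : X → X) (x z : X) : ℝ :=
  sInf {δ : ℝ | 0 < δ ∧ fbar T δ x z < δ}

end FKPaper

open Function
open scoped Finset

namespace FKPaper

section Matches

variable {X : Type*} [MetricSpace X] {T : X → X} {δ c : ℝ} {n : ℕ} {x z : X}

/-- `i s ↦ j s` is an `(n, δ)`-match of `x` and `z` with fit `k`, from `D = range i` onto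
`R = range j`. -/
def IsMatch (T : X → X) (δ : ℝ) (n : ℕ) (x z : X) {k : ℕ} (i j : Fin k → ℕ) : Prop :=
  StrictMono i ∧ StrictMono j ∧ (∀ s, i s < n) ∧ (∀ s, j s < n) ∧
    ∀ s, dist (T^[i s] x) (T^[j s] z) < δ

lemma card_le_of_strictMono {k : ℕ} {i : Fin k → ℕ} (hi : StrictMono i) (hin : ∀ s, i s < n) :
    k ≤ n := by
  simpa using Finset.card_le_card_of_injOn i (s := Finset.univ) (t := Finset.range n)
    (fun s _ => by simpa using hin s) hi.injective.injOn

lemma bddAbove_setOf_isMatch : BddAbove {k | ∃ i j : Fin k → ℕ, IsMatch T δ n x z i j} :=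
  ⟨n, fun _ ⟨_, _, hi, _, hin, _⟩ => card_le_of_strictMono hi hin⟩

lemma IsMatch.le_maxFit {k : ℕ} {i j : Fin k → ℕ} (h : IsMatch T δ n x z i j) :
    k ≤ maxFit T δ n x z :=
  le_csSup bddAbove_setOf_isMatch ⟨i, j, h⟩

lemma exists_isMatch_maxFit (T : X → X) (δ : ℝ) (n : ℕ) (x z : X) :
    ∃ i j : Fin (maxFit T δ n x z) → ℕ, IsMatch T δ n x z i j := by
  refine Nat.sSup_mem ?_ bddAbove_setOf_isMatch
  exact ⟨0, Fin.elim0, Fin.elim0, fun a => a.elim0, fun a => a.elim0, fun a => a.elim0,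
    fun a => a.elim0, fun a => a.elim0⟩

lemma maxFit_le : maxFit T δ n x z ≤ n :=
  have ⟨_, _, hi, _, hin, _⟩ := exists_isMatch_maxFit T δ n x z
  card_le_of_strictMono hi hin

lemma maxFit_mono {δ δ' : ℝ} (hδ : δ ≤ δ') : maxFit T δ n x z ≤ maxFit T δ' n x z :=
  have ⟨_, _, hi, hj, hin, hjn, hd⟩ := exists_isMatch_maxFit T δ n x z
  IsMatch.le_maxFit ⟨hi, hj, hin, hjn, fun s => (hd s).trans_le hδ⟩

lemma card_filter_le_maxFit {k : ℕ} {i j : Fin k → ℕ} (hi : StrictMono i) (hj : StrictMono j)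
    (hin : ∀ s, i s < n) (hjn : ∀ s, j s < n) (P : Fin k → Prop) [DecidablePred P]
    (hP : ∀ s, P s → dist (T^[i s] x) (T^[j s] z) < δ) :
    #{s | P s} ≤ maxFit T δ n x z := by
  set e := (Finset.univ.filter P).orderIsoOfFin rfl
  have he : StrictMono fun t => (e t : Fin k) := (Subtype.strictMono_coe _).comp e.strictMono
  exact IsMatch.le_maxFit (i := fun t => i (e t)) (j := fun t => j (e t))
    ⟨hi.comp he, hj.comp he, fun t => hin _, fun t => hjn _,
      fun t => hP _ (Finset.mem_filter.1 (e t).2).2⟩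

lemma fbarN_mem_Icc : fbarN T δ n x z ∈ Icc (0 : ℝ) 1 := by
  have hle : (maxFit T δ n x z : ℝ) ≤ n := by exact_mod_cast maxFit_le
  refine ⟨sub_nonneg.2 (div_le_one_of_le₀ hle n.cast_nonneg), ?_⟩
  simp only [fbarN, sub_le_self_iff]
  positivity

lemma isBoundedUnder_fbarN : IsBoundedUnder (· ≤ ·) atTop fun n => fbarN T δ n x z :=
  isBoundedUnder_of ⟨1, fun _ => fbarN_mem_Icc.2⟩

lemma isCoboundedUnder_fbarN : IsCoboundedUnder (· ≤ ·) atTop fun n => fbarN T δ n x z :=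
  isCoboundedUnder_le_of_le _ fun _ => fbarN_mem_Icc.1

lemma fbar_anti {δ δ' : ℝ} (hδ : δ ≤ δ') : fbar T δ' x z ≤ fbar T δ x z := by
  refine limsup_le_limsup (Eventually.of_forall fun n => ?_) isCoboundedUnder_fbarN
    isBoundedUnder_fbarN
  simp only [fbarN]
  gcongr
  exact maxFit_mono hδ

lemma fbarN_le_iff (hn : n ≠ 0) : fbarN T δ n x z ≤ c ↔ (1 - c) * n ≤ maxFit T δ n x z := by
  have hn' : (0 : ℝ) < n := by positivity
  rw [fbarN, ← le_div_iff₀ hn']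
  constructor <;> intro h <;> linarith

lemma eventually_lt_maxFit (h : fbar T δ x z < c) :
    ∀ᶠ n in atTop, (1 - c) * n < maxFit T δ n x z := by
  filter_upwards [eventually_lt_of_limsup_lt h isBoundedUnder_fbarN, eventually_ne_atTop 0]
    with n hlt hn
  have hn' : (0 : ℝ) < n := by positivity
  rw [fbarN, ← lt_div_iff₀ hn'] at *
  linarith

lemma fbar_le_of_eventually_le_maxFit (h : ∀ᶠ n in atTop, (1 - c) * n ≤ maxFit T δ n x z) :
    fbar T δ x z ≤ c :=
  limsup_le_of_le isCoboundedUnder_fbarN <| by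
    filter_upwards [h, eventually_ne_atTop 0] with n h hn using (fbarN_le_iff hn).2 h

lemma exists_fbar_lt [BoundedSpace X] : ∃ δ > 0, fbar T δ x z < δ := by
  obtain ⟨C, hC⟩ := Metric.isBounded_iff.1 (BoundedSpace.bounded_univ (α := X))
  refine ⟨max C 0 + 1, by positivity, ?_⟩
  refine (fbar_le_of_eventually_le_maxFit (c := 0) (Eventually.of_forall fun n => ?_)).trans_lt
    (by positivity)
  have hdiag : IsMatch T (max C 0 + 1) n x z (Fin.val : Fin n → ℕ) Fin.val :=
    ⟨Fin.val_strictMono, Fin.val_strictMono, Fin.isLt, Fin.isLt, fun s =>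
      (hC (mem_univ _) (mem_univ _)).trans_lt (by linarith [le_max_left C 0])⟩
  simpa using hdiag.le_maxFit

lemma rhoFK_eq_zero_iff [BoundedSpace X] : rhoFK T x z = 0 ↔ ∀ δ > 0, fbar T δ x z < δ := by
  constructor
  · intro h δ hδ
    have hne : {δ : ℝ | 0 < δ ∧ fbar T δ x z < δ}.Nonempty := exists_fbar_lt
    obtain ⟨δ', ⟨-, hδ'⟩, hlt⟩ := exists_lt_of_csInf_lt hne (show rhoFK T x z < δ from h ▸ hδ)
    exact (fbar_anti hlt.le).trans_lt (hδ'.trans hlt)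
  · intro h
    refine le_antisymm (le_of_forall_gt_imp_ge_of_dense fun δ hδ => ?_)
      (Real.sInf_nonneg fun _ hδ => hδ.1.le)
    exact csInf_le ⟨0, fun _ hδ => hδ.1.le⟩ ⟨hδ, h δ hδ⟩

end Matches

section Birkhoff

lemma abs_sum_range_sub_sum_comp_le {f : ℕ → ℝ} {C : ℝ} (hC : ∀ t, |f t| ≤ C) {n k : ℕ}
    {i : Fin k → ℕ} (hi : Injective i) (hin : ∀ s, i s < n) :
    |∑ t ∈ Finset.range n, f t - ∑ s, f (i s)| ≤ C * (n - k) := by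
  classical
  set D := Finset.univ.image i
  have hD : D ⊆ Finset.range n := by simpa [D, Finset.subset_iff] using hin
  have hcard : #D = k := by simp [D, Finset.card_image_of_injective _ hi]
  have hkn : k ≤ n := hcard ▸ (Finset.card_le_card hD).trans_eq (Finset.card_range n)
  rw [← Finset.sum_image fun a _ b _ h => hi h, ← Finset.sum_sdiff_eq_sub hD]
  calc |∑ t ∈ Finset.range n \ D, f t| ≤ ∑ _t ∈ Finset.range n \ D, C :=
        (Finset.abs_sum_le_sum_abs _ _).trans (Finset.sum_le_sum fun t _ => hC t)
    _ = C * (n - k) := by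
        rw [Finset.sum_const, Finset.card_sdiff_of_subset hD, Finset.card_range, hcard,
          nsmul_eq_mul, Nat.cast_sub hkn, mul_comm]

lemma abs_birkhoffAverage_le {Y : Type*} {S : Y → Y} {g : Y → ℝ} {C : ℝ} (hC : ∀ y, |g y| ≤ C)
    (n : ℕ) (y : Y) : |birkhoffAverage ℝ S g n y| ≤ C := by
  rcases eq_or_ne n 0 with rfl | hn
  · simpa using (abs_nonneg _).trans (hC y)
  rw [birkhoffAverage, smul_eq_mul, abs_mul, abs_inv, Nat.abs_cast,
    inv_mul_le_iff₀ (by positivity)]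
  simpa [birkhoffSum, mul_comm] using (Finset.abs_sum_le_sum_abs _ _).trans
    (Finset.sum_le_sum fun k (_ : k ∈ Finset.range n) => hC (S^[k] y))

variable {Y : Type*} [MetricSpace Y] {S : Y → Y} {g : Y → ℝ} {C ω δ : ℝ}

lemma abs_birkhoffSum_sub_le (hC : ∀ y, |g y| ≤ C) (hω : ∀ u v, dist u v < δ → |g u - g v| ≤ ω)
    (n : ℕ) (a b : Y) :
    |birkhoffSum S g n a - birkhoffSum S g n b| ≤
      2 * C * (n - maxFit S δ n a b) + ω * maxFit S δ n a b := by
  obtain ⟨i, j, hi, hj, hin, hjn, hd⟩ := exists_isMatch_maxFit S δ n a b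
  obtain ⟨ha₁, ha₂⟩ := abs_le.1 <|
    abs_sum_range_sub_sum_comp_le (fun t => hC (S^[t] a)) hi.injective hin
  obtain ⟨hb₁, hb₂⟩ := abs_le.1 <|
    abs_sum_range_sub_sum_comp_le (fun t => hC (S^[t] b)) hj.injective hjn
  have hab : |∑ s, g (S^[i s] a) - ∑ s, g (S^[j s] b)| ≤ ω * maxFit S δ n a b := by
    rw [← Finset.sum_sub_distrib]
    refine (Finset.abs_sum_le_sum_abs _ _).trans ?_
    simpa [mul_comm] using Finset.sum_le_sum fun s (_ : s ∈ Finset.univ) => hω _ _ (hd s)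
  obtain ⟨hab₁, hab₂⟩ := abs_le.1 hab
  rw [birkhoffSum, birkhoffSum, abs_le]
  constructor <;> linarith

lemma tendsto_birkhoffAverage_sub_of_forall_fbar_lt {a b : Y}
    (hab : ∀ δ > 0, fbar S δ a b < δ) (hg : UniformContinuous g) (hC : ∀ y, |g y| ≤ C) :
    Tendsto (fun n => birkhoffAverage ℝ S g n a - birkhoffAverage ℝ S g n b) atTop (𝓝 0) := by
  have hC0 : 0 ≤ C := (abs_nonneg _).trans (hC a)
  refine Metric.tendsto_nhds.2 fun ε hε => ?_
  obtain ⟨δ₁, hδ₁, hgδ₁⟩ := Metric.uniformContinuous_iff.1 hg (ε / 4) (by positivity)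
  set δ := min δ₁ (ε / (4 * (C + 1)))
  have hδ : 0 < δ := by positivity
  have hCδ : 2 * C * δ ≤ ε / 2 := by
    have h := min_le_right δ₁ (ε / (4 * (C + 1)))
    rw [le_div_iff₀ (by positivity)] at h
    nlinarith
  filter_upwards [eventually_lt_maxFit (hab δ hδ), eventually_ne_atTop 0] with n hk hn
  have hn' : (0 : ℝ) < n := by positivity
  have hkn : (maxFit S δ n a b : ℝ) ≤ n := by exact_mod_cast maxFit_le
  have hsum := abs_birkhoffSum_sub_le (S := S) hC (ω := ε / 4) (δ := δ)
    (fun u v huv => (hgδ₁ (huv.trans_le (min_le_left _ _))).le) n a b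
  rw [dist_zero_right, Real.norm_eq_abs, ← Real.dist_eq, dist_birkhoffAverage_birkhoffAverage,
    Real.dist_eq, div_lt_iff₀ hn']
  have hunmatched : 2 * C * (n - maxFit S δ n a b) ≤ 2 * C * δ * n := by
    rw [mul_assoc _ δ]
    exact mul_le_mul_of_nonneg_left (by linarith) (by positivity)
  nlinarith

end Birkhoff

section Measure

variable {Y : Type*} [MeasurableSpace Y] {ν : Measure Y} {S : Y → Y} {g : Y → ℝ} {C : ℝ}

lemma integral_birkhoffAverage (hS : MeasurePreserving S ν ν) (hg : Integrable g ν) {n : ℕ}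
    (hn : n ≠ 0) : ∫ y, birkhoffAverage ℝ S g n y ∂ν = ∫ y, g y ∂ν := by
  have hcomp (k : ℕ) : ∫ y, g (S^[k] y) ∂ν = ∫ y, g y ∂ν := by
    have hk := hS.iterate k
    rw [← integral_map hk.aemeasurable (hk.map_eq.symm ▸ hg.aestronglyMeasurable), hk.map_eq]
  simp only [birkhoffAverage, birkhoffSum, smul_eq_mul]
  rw [integral_const_mul,
    integral_finsetSum (f := fun k y => g (S^[k] y)) _ fun k _ =>
      (hS.iterate k).integrable_comp_of_integrable hg]
  simp [hcomp, hn]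

lemma measurable_birkhoffAverage (hS : Measurable S) (hg : Measurable g) (n : ℕ) :
    Measurable (birkhoffAverage ℝ S g n) := by
  unfold birkhoffAverage birkhoffSum
  fun_prop

variable [IsProbabilityMeasure ν]

lemma tendsto_birkhoffAverage_integral (hS : MeasurePreserving S ν ν) (hg : Measurable g)
    (hC : ∀ y, |g y| ≤ C) {y : Y}
    (h : ∀ w, Tendsto (fun n => birkhoffAverage ℝ S g n w - birkhoffAverage ℝ S g n y) atTop
      (𝓝 0)) :
    Tendsto (birkhoffAverage ℝ S g · y) atTop (𝓝 (∫ w, g w ∂ν)) := by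
  have hmeas := measurable_birkhoffAverage hS.measurable hg
  have hint {f : Y → ℝ} (hf : Measurable f) (hfC : ∀ y, |f y| ≤ C) : Integrable f ν :=
    .of_bound hf.aestronglyMeasurable C (ae_of_all _ hfC)
  have hbound (n : ℕ) (w : Y) :
      |birkhoffAverage ℝ S g n w - birkhoffAverage ℝ S g n y| ≤ 2 * C :=
    (abs_sub _ _).trans <| by
      linarith [abs_birkhoffAverage_le (S := S) hC n w, abs_birkhoffAverage_le (S := S) hC n y]
  have hdiff : Tendsto (fun n => ∫ w, (birkhoffAverage ℝ S g n w - birkhoffAverage ℝ S g n y) ∂ν)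
      atTop (𝓝 0) := by
    simpa using tendsto_integral_of_dominated_convergence (fun _ => 2 * C)
      (fun n => ((hmeas n).sub_const _).aestronglyMeasurable) (integrable_const _)
      (fun n => ae_of_all _ (hbound n)) (ae_of_all _ h)
  have heq : ∀ᶠ n in atTop, ∫ w, g w ∂ν -
      ∫ w, (birkhoffAverage ℝ S g n w - birkhoffAverage ℝ S g n y) ∂ν =
        birkhoffAverage ℝ S g n y := by
    filter_upwards [eventually_ne_atTop 0] with n hn
    rw [integral_sub (hint (hmeas n) (abs_birkhoffAverage_le hC n)) (integrable_const _),
      integral_birkhoffAverage hS (hint hg hC) hn]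
    simp
  simpa using (tendsto_const_nhds.sub hdiff).congr' heq

end Measure

section Visits

variable {Y : Type*} [MetricSpace Y] [CompactSpace Y] [MeasurableSpace Y] [BorelSpace Y]
  {ν : Measure Y} [IsProbabilityMeasure ν] {S : Y → Y}

open Classical in
lemma eventually_card_visits_lt (hS : MeasurePreserving S ν ν)
    (hY : ∀ a b : Y, ∀ δ > 0, fbar S δ a b < δ) {F : Set Y} (hF : IsClosed F) {c : ℝ}
    (hc : ν.real F < c) (y : Y) :
    ∀ᶠ n in atTop, (#{t ∈ Finset.range n | S^[t] y ∈ F} : ℝ) < c * n := by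
  have hc' : ν F < ENNReal.ofReal c := by
    rwa [← ofReal_measureReal (μ := ν),
      ENNReal.ofReal_lt_ofReal_iff (measureReal_nonneg.trans_lt hc)]
  obtain ⟨V, hFV, hV, hνV⟩ := F.exists_isOpen_lt_of_lt _ hc'
  obtain ⟨g, hg0, hg1, hg01⟩ := exists_continuous_zero_one_of_isClosed hV.isClosed_compl hF
    (disjoint_compl_left_iff_subset.2 hFV)
  have hgC (w : Y) : |g w| ≤ 1 := abs_le.2 ⟨by linarith [(hg01 w).1], (hg01 w).2⟩
  have hgV : ∫ w, g w ∂ν < c := by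
    calc ∫ w, g w ∂ν ≤ ∫ w, V.indicator 1 w ∂ν := by
          refine integral_mono (.of_bound g.continuous.aestronglyMeasurable 1 (ae_of_all _ hgC))
            ((integrable_const 1).indicator hV.measurableSet) fun w => ?_
          by_cases hw : w ∈ V
          · simpa [hw] using (hg01 w).2
          · simp [hw, hg0 (show w ∈ Vᶜ from hw)]
      _ = ν.real V := integral_indicator_one hV.measurableSet
      _ < c := ENNReal.toReal_lt_of_lt_ofReal hνV
  have hlim := tendsto_birkhoffAverage_integral hS g.continuous.measurable hgC fun w =>
    tendsto_birkhoffAverage_sub_of_forall_fbar_lt (hY w y)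
      (CompactSpace.uniformContinuous_of_continuous g.continuous) hgC
  filter_upwards [hlim.eventually (gt_mem_nhds hgV), eventually_ne_atTop 0] with n hn hn0
  have hcount : (#{t ∈ Finset.range n | S^[t] y ∈ F} : ℝ) ≤ birkhoffSum S g n y := by
    rw [birkhoffSum, Finset.natCast_card_filter]
    refine Finset.sum_le_sum fun t _ => ?_
    split_ifs with h
    exacts [(hg1 h).ge, (hg01 _).1]
  have hsum : birkhoffSum S g n y = n * birkhoffAverage ℝ S g n y := by
    simp [birkhoffAverage, hn0]
  have hn' : (0 : ℝ) < n := by positivity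
  nlinarith

end Visits

section Fibers

variable {X Y : Type*} [MetricSpace X] [MetricSpace Y] {φ : X → Y} {ε δ : ℝ}

def nearCollisionSet (φ : X → Y) (ε δ : ℝ) : Set Y :=
  {y | ∃ p q, φ p = y ∧ dist y (φ q) ≤ δ ∧ ε ≤ dist p q}

lemma dist_lt_of_notMem_nearCollisionSet {p q : X} (hp : φ p ∉ nearCollisionSet φ ε δ)
    (hpq : dist (φ p) (φ q) ≤ δ) : dist p q < ε :=
  not_le.1 fun h => hp ⟨p, q, rfl, hpq, h⟩

variable [CompactSpace X]

lemma isClosed_nearCollisionSet (hφ : Continuous φ) (ε δ : ℝ) :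
    IsClosed (nearCollisionSet φ ε δ) := by
  have himage : nearCollisionSet φ ε δ = (fun pq : X × X => φ pq.1) ''
      {pq | dist (φ pq.1) (φ pq.2) ≤ δ ∧ ε ≤ dist pq.1 pq.2} := by
    ext y
    simp only [nearCollisionSet, mem_ofPred_eq, mem_image, Prod.exists]
    constructor
    · rintro ⟨p, q, rfl, h⟩
      exact ⟨p, q, h, rfl⟩
    · rintro ⟨p, q, h, rfl⟩
      exact ⟨p, q, rfl, h⟩
  have hclosed : IsClosed {pq : X × X | dist (φ pq.1) (φ pq.2) ≤ δ ∧ ε ≤ dist pq.1 pq.2} := by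
    rw [ofPred_and]
    exact (isClosed_le (by fun_prop) continuous_const).inter
      (isClosed_le continuous_const (by fun_prop))
  rw [himage]
  exact (hclosed.isCompact.image (by fun_prop)).isClosed

lemma iInter_nearCollisionSet_subset (hφ : Continuous φ) (hε : 0 < ε) :
    ⋂ m : ℕ, nearCollisionSet φ ε (1 / (m + 1)) ⊆ {y | ∃! x, φ x = y}ᶜ := by
  rintro y hy ⟨x, -, hx⟩
  set K : ℕ → Set (X × X) := fun m =>
    {pq | φ pq.1 = y ∧ dist y (φ pq.2) ≤ 1 / (m + 1) ∧ ε ≤ dist pq.1 pq.2}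
  have hK (m : ℕ) : IsClosed (K m) := by
    simp only [K, ofPred_and]
    exact (isClosed_eq (by fun_prop) continuous_const).inter
      ((isClosed_le (by fun_prop) continuous_const).inter
        (isClosed_le continuous_const (by fun_prop)))
  obtain ⟨⟨p, q⟩, hpq⟩ := IsCompact.nonempty_iInter_of_sequence_nonempty_isCompact_isClosed K
    (fun m pq ⟨h₁, h₂, h₃⟩ => ⟨h₁, h₂.trans (by gcongr; simp), h₃⟩)
    (fun m => let ⟨p, q, h⟩ := mem_iInter.1 hy m; ⟨(p, q), h⟩) (hK 0).isCompact hK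
  simp only [K, mem_iInter, mem_ofPred_eq] at hpq
  have hq : φ q = y := by
    refine (dist_le_zero.1 (le_of_forall_gt_imp_ge_of_dense fun r hr => ?_)).symm
    obtain ⟨m, hm⟩ := exists_nat_one_div_lt hr
    exact (hpq m).2.1.trans hm.le
  have hpq' : p = q := (hx p (hpq 0).1).trans (hx q hq).symm
  linarith [(hpq 0).2.2, dist_self q, hpq' ▸ (hpq 0).2.2]

lemma exists_measureReal_nearCollisionSet_lt [MeasurableSpace Y] [OpensMeasurableSpace Y]
    {ν : Measure Y} [IsProbabilityMeasure ν] (hφ : Continuous φ)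
    (hreg : ν {y | ∃! x, φ x = y} = 1) (hε : 0 < ε) {η : ℝ} (hη : 0 < η) :
    ∃ δ > 0, ν.real (nearCollisionSet φ ε δ) < η := by
  set W : ℕ → Set Y := fun m => nearCollisionSet φ ε (1 / (m + 1))
  have hWm (m : ℕ) : MeasurableSet (W m) := (isClosed_nearCollisionSet hφ _ _).measurableSet
  have hW : Antitone W := fun m m' h y ⟨p, q, hp, hq, hpq⟩ =>
    ⟨p, q, hp, hq.trans (by gcongr), hpq⟩
  have hzero : ν (⋂ m, W m) = 0 := by
    refine (prob_compl_eq_one_iff (.iInter hWm)).1 (le_antisymm prob_le_one ?_)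
    exact hreg ▸ measure_mono (subset_compl_comm.1 (iInter_nearCollisionSet_subset hφ hε))
  have hlim := tendsto_measure_iInter_atTop (fun m => (hWm m).nullMeasurableSet) hW
    ⟨0, measure_ne_top ν _⟩
  rw [hzero] at hlim
  obtain ⟨m, hm⟩ := (hlim.eventually (gt_mem_nhds (ENNReal.ofReal_pos.2 hη))).exists
  exact ⟨1 / (m + 1), by positivity, ENNReal.toReal_lt_of_lt_ofReal hm⟩

end Fibers

section Lifting

variable {X Y : Type*} [MetricSpace X] [MetricSpace Y] {T : X → X} {S : Y → Y} {φ : X → Y}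

open Classical in
lemma maxFit_le_maxFit_add_card_visits (hφ : Semiconj φ T S) {F : Set Y} {δ ε : ℝ}
    (hF : ∀ p q, φ p ∉ F → dist (φ p) (φ q) < δ → dist p q < ε) (n : ℕ) (x z : X) :
    maxFit S δ n (φ x) (φ z) ≤ maxFit T ε n x z + #{t ∈ Finset.range n | S^[t] (φ x) ∈ F} := by
  obtain ⟨i, j, hi, hj, hin, hjn, hd⟩ := exists_isMatch_maxFit S δ n (φ x) (φ z)
  have hgood := card_filter_le_maxFit (T := T) (δ := ε) (x := x) (z := z) hi hj hin hjn
    (fun s => S^[i s] (φ x) ∉ F) fun s hs => hF _ _ (by rwa [hφ.iterate_right])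
      (by rw [hφ.iterate_right, hφ.iterate_right]; exact hd s)
  have hbad : #{s | S^[i s] (φ x) ∈ F} ≤ #{t ∈ Finset.range n | S^[t] (φ x) ∈ F} :=
    Finset.card_le_card_of_injOn i (fun s hs => by simp_all) hi.injective.injOn
  have hsplit := Finset.card_filter_add_card_filter_not (s := Finset.univ)
    (fun s : Fin (maxFit S δ n (φ x) (φ z)) => S^[i s] (φ x) ∈ F)
  simp only [Finset.card_univ, Fintype.card_fin] at hsplit
  omega

end Lifting

end FKPaper

open FKPaper Filter Topology MeasureTheory Set

theorem topologically_loosely_Kronecker_of_regular_extension_general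
    {X Y : Type*} [MetricSpace X] [CompactSpace X]
    [MetricSpace Y] [CompactSpace Y] [MeasurableSpace Y] [BorelSpace Y]
    (T : X → X) (S : Y → Y) (hS : Continuous S)
    (hY : ∀ a b : Y, rhoFK S a b = 0)
    (ν : Measure Y) [IsProbabilityMeasure ν]
    (hνinv : ∀ A : Set Y, MeasurableSet A → ν (S ⁻¹' A) = ν A)
    (φ : X → Y) (hφc : Continuous φ)
    (hconj : ∀ x : X, φ (T x) = S (φ x))
    (hreg : ν {y : Y | ∃! x : X, φ x = y} = 1) :
    ∀ x y : X, rhoFK T x y = 0 := by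
  classical
  have hSν : MeasurePreserving S ν ν := ⟨hS.measurable, Measure.ext fun A hA => by
    rw [Measure.map_apply hS.measurable hA, hνinv A hA]⟩
  have hY' (a b : Y) : ∀ δ > 0, fbar S δ a b < δ := rhoFK_eq_zero_iff.1 (hY a b)
  intro x z
  refine rhoFK_eq_zero_iff.2 fun ε hε => ?_
  -- the fit is at least `(1 - ε/4) n` in `Y`, and at most `(ε/2) n` of it is lost in lifting
  obtain ⟨δ, hδ, hνδ⟩ :=
    exists_measureReal_nearCollisionSet_lt hφc hreg hε (show 0 < ε / 2 by positivity)
  have hvisits :=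
    eventually_card_visits_lt hSν hY' (isClosed_nearCollisionSet hφc ε δ) hνδ (φ x)
  have hfit := eventually_lt_maxFit <|
    (hY' (φ x) (φ z) (min δ (ε / 4)) (by positivity)).trans_le (min_le_right _ _)
  refine (fbar_le_of_eventually_le_maxFit (c := 3 * ε / 4) ?_).trans_lt (by linarith)
  filter_upwards [hvisits, hfit] with n hvisit hk
  have hlift : (maxFit S (min δ (ε / 4)) n (φ x) (φ z) : ℝ) ≤ maxFit T ε n x z +
      #{t ∈ Finset.range n | S^[t] (φ x) ∈ nearCollisionSet φ ε δ} := by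
    exact_mod_cast maxFit_le_maxFit_add_card_visits hconj
      (fun p q hp hpq => dist_lt_of_notMem_nearCollisionSet hp (hpq.le.trans (min_le_left _ _)))
      n x z
  linarith

/-- every regular extension of a topologically loosely Kronecker TDS is
topologically loosely Kronecker. -/
theorem topologically_loosely_Kronecker_of_regular_extension
    {X Y : Type*} [MetricSpace X] [CompactSpace X] [Nonempty X]
    [MetricSpace Y] [CompactSpace Y] [Nonempty Y] [MeasurableSpace Y] [BorelSpace Y]
    (T : X → X) (S : Y → Y) (hT : Continuous T) (hS : Continuous S)
    (hY : ∀ a b : Y, rhoFK S a b = 0)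
    (ν : Measure Y) [IsProbabilityMeasure ν]
    (hνinv : ∀ A : Set Y, MeasurableSet A → ν (S ⁻¹' A) = ν A)
    (φ : X → Y) (hφc : Continuous φ) (hφs : Function.Surjective φ)
    (hconj : ∀ x : X, φ (T x) = S (φ x))
    (hreg : ν {y : Y | ∃! x : X, φ x = y} = 1) :
    ∀ x y : X, rhoFK T x y = 0 :=
  topologically_loosely_Kronecker_of_regular_extension_general T S hS hY ν hνinv φ hφc hconj hreg
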